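/- For the augmented Zagreb index (f(x,y) = (xy/(x+y−2))³) and every n ≥ 5, the maximum of TI_f over link vectors in {1,2}^{n−2} ending in 1 strictly exceeds the maximum over link vectors ending in 2; that is, M_f(n) = M_f(n,1) > M_f(n,2). -/

import Mathlib

noncomputable section
open Classical

/-- Constant term of a degree-based topological index on polyomino chains. -/
def cst (f : ℕ → ℕ → ℝ) : ℝ := 4 * f 2 3 + 2 * f 2 2 + f 3 3

/-- `gone f i` is `g_f(i)`, the increment for the first link (n = 3). -/
def gone (f : ℕ → ℕ → ℝ) (i : ℕ) : ℝ :=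
  if i = 1 then 3 * f 3 3 else 2 * f 3 4 + 2 * f 2 4 - f 3 3

/-- `gpair f i j` is `g_f(i,j)`, the increment for a link `j` after a link `i`. -/
def gpair (f : ℕ → ℕ → ℝ) (i j : ℕ) : ℝ :=
  if i = 1 then
    (if j = 1 then 3 * f 3 3 else 3 * f 3 4 + f 2 4 + f 2 3 - 2 * f 3 3)
  else
    (if j = 1 then f 3 4 - f 2 4 + f 2 3 + 2 * f 3 3 else f 4 4 + 2 * f 2 4)

/-- Sum of `gpair` increments along a list of links, given the previous link. -/
def chainSum (f : ℕ → ℕ → ℝ) : ℕ → List ℕ → ℝ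
  | _, [] => 0
  | a, b :: t => gpair f a b + chainSum f b t

/-- `TI f L` is the degree-based topological index of the polyomino chain with
link vector `L = [L_3, …, L_n]`. -/
def TI (f : ℕ → ℕ → ℝ) : List ℕ → ℝ
  | [] => cst f
  | a :: t => cst f + gone f a + chainSum f a t

/-- `ValidLinks n L` means `L` is a link vector of a polyomino chain with `n` squares:
it has length `n - 2` and entries in `{1, 2}`. -/
def ValidLinks (n : ℕ) (L : List ℕ) : Prop :=
  L.length = n - 2 ∧ ∀ x ∈ L, x = 1 ∨ x = 2

/-- `Mmax f n i` is the maximum of `TI f` over link vectors of length `n - 2`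
with last entry `i`. -/
def Mmax (f : ℕ → ℕ → ℝ) (n i : ℕ) : ℝ :=
  sSup {t : ℝ | ∃ L, ValidLinks n L ∧ L.getLast? = some i ∧ TI f L = t}

/-- `mMin f n i` is the minimum of `TI f` over link vectors of length `n - 2`
with last entry `i`. -/
def mMin (f : ℕ → ℕ → ℝ) (n i : ℕ) : ℝ :=
  sInf {t : ℝ | ∃ L, ValidLinks n L ∧ L.getLast? = some i ∧ TI f L = t}

/-- The tie count `n_t(n, i)`. -/
def nt (f : ℕ → ℕ → ℝ) : ℕ → ℕ → ℕ
  | n + 4, i =>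
    if Mmax f (n + 3) 1 + gpair f 1 i = Mmax f (n + 3) 2 + gpair f 2 i then
      1 + nt f (n + 3) 1 + nt f (n + 3) 2
    else if Mmax f (n + 3) 1 + gpair f 1 i > Mmax f (n + 3) 2 + gpair f 2 i then
      nt f (n + 3) 1
    else
      nt f (n + 3) 2
  | _, _ => 0

/-- The function defining the augmented Zagreb index: `f(x,y) = (xy/(x+y-2))³`. -/
def fAZI : ℕ → ℕ → ℝ := fun x y => ((x * y : ℝ) / (x + y - 2)) ^ 3


/-- Recursive description of the maximum. -/
def Mrec (f : ℕ → ℕ → ℝ) : ℕ → ℕ → ℝ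
  | n + 4, i => max (Mrec f (n + 3) 1 + gpair f 1 i) (Mrec f (n + 3) 2 + gpair f 2 i)
  | _, i => cst f + gone f i

lemma Mrec_succ (f : ℕ → ℕ → ℝ) {n : ℕ} (hn : 3 ≤ n) (i : ℕ) :
    Mrec f (n + 1) i = max (Mrec f n 1 + gpair f 1 i) (Mrec f n 2 + gpair f 2 i) := by
  obtain ⟨m, rfl⟩ : ∃ m, n = m + 3 := ⟨n - 3, by omega⟩
  rfl

lemma chainSum_append (f : ℕ → ℕ → ℝ) (j : ℕ) :
    ∀ (t : List ℕ) (a : ℕ), chainSum f a (t ++ [j]) =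
      chainSum f a t + gpair f ((a :: t).getLast (List.cons_ne_nil a t)) j
  | [], a => by simp [chainSum]
  | b :: t, a => by
    rw [List.getLast_cons_cons]
    show gpair f a b + chainSum f b (t ++ [j]) =
      gpair f a b + chainSum f b t + gpair f ((b :: t).getLast (List.cons_ne_nil b t)) j
    rw [chainSum_append f j t b]
    ring

lemma TI_append (f : ℕ → ℕ → ℝ) (a : ℕ) (t : List ℕ) (j : ℕ) :
    TI f ((a :: t) ++ [j]) =
      TI f (a :: t) + gpair f ((a :: t).getLast (List.cons_ne_nil a t)) j := by
  simp only [List.cons_append, TI, chainSum_append f j t a]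
  ring

lemma TI_le_Mrec (f : ℕ → ℕ → ℝ) :
    ∀ n, 3 ≤ n → ∀ i L, ValidLinks n L → L.getLast? = some i → TI f L ≤ Mrec f n i := by
  intro n hn
  induction n, hn using Nat.le_induction with
  | base =>
    intro i L hL hlast
    obtain ⟨hlen, _⟩ := hL
    match L, hlen with
    | [x], _ =>
      have hx : x = i := by simpa using hlast
      rw [← hx]
      show cst f + gone f x + 0 ≤ cst f + gone f x
      rw [add_zero]
  | succ n hn ih =>
    intro i L hL hlast
    obtain ⟨hlen, hmem⟩ := hL
    rcases List.eq_nil_or_concat L with rfl | ⟨M, b, hM⟩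
    · simp at hlast
    rw [List.concat_eq_append] at hM
    subst hM
    rw [List.getLast?_concat] at hlast
    have hbi : b = i := by simpa using hlast
    rw [hbi] at hmem hlen ⊢
    have hMlen : M.length = n - 2 := by
      rw [List.length_append] at hlen; simp at hlen; omega
    have hMne : M ≠ [] := by
      intro h; subst h; simp at hMlen; omega
    obtain ⟨a, t, rfl⟩ : ∃ a t, M = a :: t := by
      match M, hMne with | a :: t, _ => exact ⟨a, t, rfl⟩
    set j := (a :: t).getLast (List.cons_ne_nil a t) with hj
    have hjmem : j ∈ a :: t := List.getLast_mem _
    have hj12 : j = 1 ∨ j = 2 := hmem j (List.mem_append_left _ hjmem)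
    have hML : ValidLinks n (a :: t) :=
      ⟨hMlen, fun x hx => hmem x (List.mem_append_left _ hx)⟩
    have hlast' : (a :: t).getLast? = some j :=
      List.getLast?_eq_getLast _
    have hIH : TI f (a :: t) ≤ Mrec f n j := ih j (a :: t) hML hlast'
    rw [TI_append]
    rw [Mrec_succ f hn]
    rcases hj12 with h1 | h2
    · rw [← hj, h1]
      calc TI f (a :: t) + gpair f 1 i ≤ Mrec f n 1 + gpair f 1 i := by
            rw [h1] at hIH; linarith
        _ ≤ _ := le_max_left _ _
    · rw [← hj, h2]
      calc TI f (a :: t) + gpair f 2 i ≤ Mrec f n 2 + gpair f 2 i := by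
            rw [h2] at hIH; linarith
        _ ≤ _ := le_max_right _ _

lemma exists_Mrec (f : ℕ → ℕ → ℝ) :
    ∀ n, 3 ≤ n → ∀ i, i = 1 ∨ i = 2 →
      ∃ L, ValidLinks n L ∧ L.getLast? = some i ∧ TI f L = Mrec f n i := by
  intro n hn
  induction n, hn using Nat.le_induction with
  | base =>
    intro i hi
    refine ⟨[i], ⟨rfl, ?_⟩, rfl, ?_⟩
    · intro x hx
      simp only [List.mem_singleton] at hx
      omega
    show cst f + gone f i + 0 = cst f + gone f i
    rw [add_zero]
  | succ n hn ih =>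
    intro i hi
    obtain ⟨L1, hv1, hl1, ht1⟩ := ih 1 (Or.inl rfl)
    obtain ⟨L2, hv2, hl2, ht2⟩ := ih 2 (Or.inr rfl)
    have key : ∀ (j : ℕ) (Lj : List ℕ), ValidLinks n Lj → Lj.getLast? = some j →
        TI f Lj = Mrec f n j →
        ∃ L, ValidLinks (n+1) L ∧ L.getLast? = some i ∧
          TI f L = Mrec f n j + gpair f j i := by
      intro j Lj hv hl ht
      have hne : Lj ≠ [] := by
        intro h; subst h; simp at hl
      obtain ⟨a, t, rfl⟩ : ∃ a t, Lj = a :: t := by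
        match Lj, hne with | a :: t, _ => exact ⟨a, t, rfl⟩
      have hjlast : (a :: t).getLast (List.cons_ne_nil a t) = j := by
        rw [List.getLast?_eq_getLast (List.cons_ne_nil a t)] at hl
        simpa using hl
      refine ⟨(a :: t) ++ [i], ⟨?_, ?_⟩, List.getLast?_concat, ?_⟩
      · rw [List.length_append, hv.1]; simp; omega
      · intro x hx
        rcases List.mem_append.1 hx with h | h
        · exact hv.2 x h
        · simp at h; subst h; exact hi
      · rw [TI_append, hjlast, ht]
    rw [Mrec_succ f hn]
    rcases max_choice (Mrec f n 1 + gpair f 1 i) (Mrec f n 2 + gpair f 2 i) with h | h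
    · rw [h]; exact key 1 L1 hv1 hl1 ht1
    · rw [h]; exact key 2 L2 hv2 hl2 ht2

lemma Mmax_eq_Mrec (f : ℕ → ℕ → ℝ) {n : ℕ} (hn : 3 ≤ n) {i : ℕ} (hi : i = 1 ∨ i = 2) :
    Mmax f n i = Mrec f n i := by
  obtain ⟨L, hv, hl, ht⟩ := exists_Mrec f n hn i hi
  have hmem : Mrec f n i ∈ {t : ℝ | ∃ L, ValidLinks n L ∧ L.getLast? = some i ∧ TI f L = t} :=
    ⟨L, hv, hl, ht⟩
  have hub : ∀ t ∈ {t : ℝ | ∃ L, ValidLinks n L ∧ L.getLast? = some i ∧ TI f L = t},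
      t ≤ Mrec f n i := by
    rintro t ⟨L', hv', hl', rfl⟩
    exact TI_le_Mrec f n hn i L' hv' hl'
  exact le_antisymm (csSup_le ⟨_, hmem⟩ hub) (le_csSup ⟨_, hub⟩ hmem)

-- numeric values
lemma g11v : gpair fAZI 1 1 = 2187 / 64 := by norm_num [gpair, fAZI]
lemma g12v : gpair fAZI 1 2 = 5184 / 125 + 16 - 729 / 32 := by norm_num [gpair, fAZI]
lemma g21v : gpair fAZI 2 1 = 1728 / 125 + 729 / 32 := by norm_num [gpair, fAZI]
lemma g22v : gpair fAZI 2 2 = 512 / 27 + 16 := by norm_num [gpair, fAZI]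
lemma gone1v : gone fAZI 1 = 2187 / 64 := by norm_num [gone, fAZI]
lemma gone2v : gone fAZI 2 = 3456 / 125 + 16 - 729 / 64 := by norm_num [gone, fAZI]

/-- the generic alternation step -/
lemma stepD {n : ℕ} (hn : 3 ≤ n) (D : ℝ)
    (hD1 : gpair fAZI 2 2 - gpair fAZI 1 2 ≤ D)
    (hD2 : D ≤ gpair fAZI 2 1 - gpair fAZI 1 1)
    (h : Mrec fAZI n 1 - Mrec fAZI n 2 = D) :
    Mrec fAZI (n + 1) 1 - Mrec fAZI (n + 1) 2 =
      gpair fAZI 2 1 - gpair fAZI 1 2 - D := by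
  rw [Mrec_succ fAZI hn 1, Mrec_succ fAZI hn 2,
    max_eq_right (by linarith), max_eq_left (by linarith)]
  linarith

lemma step0 {n : ℕ} (hn : 3 ≤ n) (h : Mrec fAZI n 1 = Mrec fAZI n 2) :
    Mrec fAZI (n + 1) 1 - Mrec fAZI (n + 1) 2 =
      gpair fAZI 2 1 - gpair fAZI 2 2 := by
  have h1 : gpair fAZI 1 1 ≤ gpair fAZI 2 1 := by rw [g11v, g21v]; norm_num
  have h2 : gpair fAZI 1 2 ≤ gpair fAZI 2 2 := by rw [g12v, g22v]; norm_num
  rw [Mrec_succ fAZI hn 1, Mrec_succ fAZI hn 2,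
    max_eq_right (by linarith), max_eq_right (by linarith)]
  ring

lemma d3 : Mrec fAZI 3 1 - Mrec fAZI 3 2 = gpair fAZI 2 1 - gpair fAZI 1 2 := by
  show cst fAZI + gone fAZI 1 - (cst fAZI + gone fAZI 2) = _
  rw [gone1v, gone2v, g21v, g12v]; norm_num

lemma d4 : Mrec fAZI 4 1 - Mrec fAZI 4 2 = 0 := by
  have := stepD (le_refl 3) (gpair fAZI 2 1 - gpair fAZI 1 2)
    (by simp only [g11v, g12v, g21v, g22v]; norm_num)
    (by simp only [g11v, g12v, g21v, g22v]; norm_num) d3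
  linarith

lemma d5 : Mrec fAZI 5 1 - Mrec fAZI 5 2 = gpair fAZI 2 1 - gpair fAZI 2 2 := by
  exact step0 (by norm_num) (by linarith [d4])

lemma invariant : ∀ n, 5 ≤ n →
    Mrec fAZI n 1 - Mrec fAZI n 2 = gpair fAZI 2 1 - gpair fAZI 2 2 ∨
    Mrec fAZI n 1 - Mrec fAZI n 2 = gpair fAZI 2 2 - gpair fAZI 1 2 := by
  intro n hn
  induction n, hn using Nat.le_induction with
  | base => exact Or.inl d5
  | succ n hn ih =>
    have hn3 : 3 ≤ n := by omega
    rcases ih with h | h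
    · right
      have := stepD hn3 _ (by simp only [g11v, g12v, g21v, g22v]; norm_num)
        (by simp only [g11v, g12v, g21v, g22v]; norm_num) h
      linarith
    · left
      have := stepD hn3 _ (by simp only [g11v, g12v, g21v, g22v]; norm_num)
        (by simp only [g11v, g12v, g21v, g22v]; norm_num) h
      linarith

/-- for the augmented Zagreb index and `n ≥ 5`,
`M_f(n) = M_f(n,1) > M_f(n,2)`. -/
theorem stmt18 :
    ∀ n : ℕ, 5 ≤ n →
      max (Mmax fAZI n 1) (Mmax fAZI n 2) = Mmax fAZI n 1 ∧
      Mmax fAZI n 1 > Mmax fAZI n 2 := by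
  intro n hn
  have hn3 : 3 ≤ n := by omega
  have e1 : Mmax fAZI n 1 = Mrec fAZI n 1 := Mmax_eq_Mrec fAZI hn3 (Or.inl rfl)
  have e2 : Mmax fAZI n 2 = Mrec fAZI n 2 := Mmax_eq_Mrec fAZI hn3 (Or.inr rfl)
  have hpos : Mrec fAZI n 1 - Mrec fAZI n 2 > 0 := by
    rcases invariant n hn with h | h
    · rw [h, g21v, g22v]; norm_num
    · rw [h, g22v, g12v]; norm_num
  constructor
  · rw [e1, e2]; exact max_eq_left (by linarith)
  · rw [e1, e2]; linarith

end
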